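/- arXiv:2007.01604 — 3 statements merged into one kernel-verified Lean document; each statement's English description precedes it below -/
import Mathlib

section
/- Let P be a polynomial with complex coefficients and let Ω ⊆ ℂ be a nonempty, bounded, open set such that Re(P(z)) = 0 for every z in the topological frontier of Ω. Then P is constant, i.e. P.natDegree = 0. -/
/-!
Re P vanishes on the frontier of the bounded set Ω, hence on Ω by the maximum principle applied
to exp(±P). Near a point of Ω the values of P thus lie in the imaginary axis, which has empty
interior, so by the open mapping theorem P is locally constant, hence constant.
-/

open Complex Filter Polynomial Topology

section

variable {E : Type*} [NormedAddCommGroup E] [NormedSpace ℂ E]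

/-- The maximum modulus principle for `exp ∘ f`, as `‖exp w‖ = Real.exp w.re`. -/
theorem Complex.re_le_of_forall_mem_frontier_re_le [Nontrivial E] {f : E → ℂ} {U : Set E}
    (hU : Bornology.IsBounded U) (hd : DiffContOnCl ℂ f U) {C : ℝ}
    (hC : ∀ z ∈ frontier U, (f z).re ≤ C) {z : E} (hz : z ∈ closure U) : (f z).re ≤ C := by
  have hexp : ‖exp (f z)‖ ≤ Real.exp C :=
    norm_le_of_forall_mem_frontier_norm_le hU (differentiable_exp.comp_diffContOnCl hd)
      (fun w hw => by simpa only [Function.comp_apply, norm_exp] using Real.exp_le_exp.2 (hC w hw))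
      hz
  rwa [norm_exp, Real.exp_le_exp] at hexp

theorem Complex.re_eq_of_forall_mem_frontier_re_eq [Nontrivial E] {f : E → ℂ} {U : Set E}
    (hU : Bornology.IsBounded U) (hd : DiffContOnCl ℂ f U) {c : ℝ}
    (hc : ∀ z ∈ frontier U, (f z).re = c) {z : E} (hz : z ∈ closure U) : (f z).re = c := by
  have hle := re_le_of_forall_mem_frontier_re_le hU hd (fun w hw => (hc w hw).le) hz
  have hge := re_le_of_forall_mem_frontier_re_le hU hd.neg (C := -c)
    (fun w hw => by simp [hc w hw]) hz
  simp only [Pi.neg_apply, neg_re, neg_le_neg_iff] at hge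
  exact le_antisymm hle hge

/-- A level set of `Complex.re` has empty interior, so the open mapping theorem applies. -/
theorem AnalyticAt.eventually_eq_of_eventually_re_eq {g : E → ℂ} {z₀ : E}
    (hg : AnalyticAt ℂ g z₀) {c : ℝ} (hre : ∀ᶠ z in 𝓝 z₀, (g z).re = c) :
    ∀ᶠ z in 𝓝 z₀, g z = g z₀ := by
  refine hg.eventually_constant_or_nhds_le_map_nhds.resolve_right fun hopen => ?_
  have hmem : re ⁻¹' {c} ∈ 𝓝 (g z₀) := hopen hre
  rw [← interior_mem_nhds, interior_preimage_re, interior_singleton] at hmem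
  exact Filter.empty_notMem _ hmem

end

theorem Polynomial.natDegree_eq_zero_of_eventually_eval_eq {R : Type*} [CommRing R] [IsDomain R]
    [TopologicalSpace R] [T1Space R] {x : R} [(𝓝[≠] x).NeBot] {P : R[X]} {c : R}
    (h : ∀ᶠ z in 𝓝 x, P.eval z = c) : P.natDegree = 0 := by
  have hP : P = C c :=
    eq_of_infinite_eval_eq P (C c) <| (infinite_of_mem_nhds x h).mono fun z hz => by simpa using hz
  rw [hP, natDegree_C]

theorem natDegree_eq_zero_of_re_eval_eq_zero_on_frontier (P : Polynomial ℂ) (Ω : Set ℂ)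
    (hne : Ω.Nonempty) (hbd : Bornology.IsBounded Ω) (hop : IsOpen Ω)
    (hfr : ∀ z ∈ frontier Ω, (Polynomial.eval z P).re = 0) :
    P.natDegree = 0 := by
  obtain ⟨z₀, hz₀⟩ := hne
  have hre : ∀ᶠ z in 𝓝 z₀, (P.eval z).re = 0 :=
    Filter.mem_of_superset (hop.mem_nhds hz₀) fun z hz =>
      re_eq_of_forall_mem_frontier_re_eq hbd P.differentiable.diffContOnCl hfr (subset_closure hz)
  exact natDegree_eq_zero_of_eventually_eval_eq
    ((P.differentiable.analyticAt z₀).eventually_eq_of_eventually_re_eq hre)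
end

section
/- Let P be a nonconstant polynomial with complex coefficients (0 < P.natDegree). Then for every z ∈ ℂ with Re(P(z)) < 0, the connected component of z inside the open set {w : ℂ | Re(P(w)) < 0} is unbounded (it does not satisfy Bornology.IsBounded). -/
/-!
If a component `K` of `{Re f < 0}` for an entire `f` were bounded, then `Re f ≥ 0` on its frontier,
which lies outside `{Re f < 0}`; the maximum modulus principle applied to `‖exp (-f)‖ = exp (-Re f)`
then gives `Re f ≥ 0` on `K`, a contradiction.
-/

open Set Bornology

theorem IsOpen.disjoint_frontier_connectedComponentIn {α : Type*} [TopologicalSpace α]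
    [LocallyConnectedSpace α] {U : Set α} (hU : IsOpen U) (x : α) :
    Disjoint (frontier (connectedComponentIn U x)) U := by
  refine Set.disjoint_left.mpr fun w hw hwU => ?_
  obtain ⟨y, hyw, hyx⟩ := mem_closure_iff_nhds.mp (frontier_subset_closure hw)
    (connectedComponentIn U w) (connectedComponentIn_mem_nhds (hU.mem_nhds hwU))
  have hw_mem : w ∈ connectedComponentIn U x := by
    rw [connectedComponentIn_eq hyx, ← connectedComponentIn_eq hyw]
    exact mem_connectedComponentIn hwU
  rw [hU.connectedComponentIn.frontier_eq] at hw
  exact hw.2 hw_mem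

theorem not_isBounded_connectedComponentIn_re_lt_zero {E : Type*} [NormedAddCommGroup E]
    [NormedSpace ℂ E] [Nontrivial E] {f : E → ℂ} (hf : Differentiable ℂ f) {z : E}
    (hz : (f z).re < 0) :
    ¬ IsBounded (connectedComponentIn {w | (f w).re < 0} z) := by
  intro hb
  set U : Set E := {w | (f w).re < 0}
  have hU : IsOpen U := isOpen_lt (Complex.continuous_re.comp hf.continuous) continuous_const
  have hexp : Differentiable ℂ fun w => Complex.exp (-f w) := hf.neg.cexp
  have hfrontier : ∀ w ∈ frontier (connectedComponentIn U z), ‖Complex.exp (-f w)‖ ≤ 1 := by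
    intro w hw
    have hwU : w ∉ U := (hU.disjoint_frontier_connectedComponentIn z).notMem_of_mem_left hw
    simpa [Complex.norm_exp, U] using hwU
  have hz_le : ‖Complex.exp (-f z)‖ ≤ 1 :=
    Complex.norm_le_of_forall_mem_frontier_norm_le hb hexp.diffContOnCl hfrontier
      (subset_closure (mem_connectedComponentIn hz))
  rw [Complex.norm_exp, Complex.neg_re, Real.exp_le_one_iff] at hz_le
  linarith

theorem connectedComponentIn_re_lt_zero_unbounded_general (P : Polynomial ℂ)
    (z : ℂ) (hz : (Polynomial.eval z P).re < 0) :
    ¬ Bornology.IsBounded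
      (connectedComponentIn {w : ℂ | (Polynomial.eval w P).re < 0} z) :=
  not_isBounded_connectedComponentIn_re_lt_zero P.differentiable hz

theorem connectedComponentIn_re_lt_zero_unbounded (P : Polynomial ℂ)
    (hP : 0 < P.natDegree) (z : ℂ) (hz : (Polynomial.eval z P).re < 0) :
    ¬ Bornology.IsBounded
      (connectedComponentIn {w : ℂ | (Polynomial.eval w P).re < 0} z) :=
  connectedComponentIn_re_lt_zero_unbounded_general P z hz
end

section
/- Let P be a nonconstant polynomial with complex coefficients (0 < P.natDegree). Then for every z ∈ ℂ with Re(P(z)) = 0, the connected component of z inside the level set {w : ℂ | Re(P(w)) = 0} is unbounded (it does not satisfy Bornology.IsBounded). -/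
/-!
If the component of `z` in `Z = P⁻¹(iℝ)` were bounded, it would be compact; as components of a
compact Hausdorff space are intersections of clopen sets, `z` would then lie in a compact set
`K = O ∩ Z` with `O` open. On `K`, `Im P` attains a maximum at some `a`. By the open mapping
theorem `P(O)` contains `P(a) + it` for small `t > 0`, and any preimage of such a point in `O`
lies in `K` and has a larger `Im P`.
-/

open Set Topology

theorem exists_isClopen_mem_subset_of_connectedComponent_subset {X : Type*}
    [TopologicalSpace X] [T2Space X] [CompactSpace X] {x : X} {U : Set X} (hU : IsOpen U)
    (hxU : connectedComponent x ⊆ U) : ∃ V, IsClopen V ∧ x ∈ V ∧ V ⊆ U := by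
  have hdisj : Uᶜ ∩ ⋂ s : {s : Set X // IsClopen s ∧ x ∈ s}, (s : Set X) = ∅ := by
    rwa [← disjoint_iff_inter_eq_empty, disjoint_compl_left_iff_subset,
      ← connectedComponent_eq_iInter_isClopen]
  obtain ⟨t, ht⟩ :=
    hU.isClosed_compl.isCompact.elim_finite_subfamily_closed _ (fun s ↦ s.2.1.1) hdisj
  refine ⟨⋂ s ∈ t, s.1, isClopen_biInter_finset fun s _ ↦ s.2.1, mem_iInter₂.2 fun s _ ↦ s.2.2, ?_⟩
  rwa [← disjoint_iff_inter_eq_empty, disjoint_compl_left_iff_subset] at ht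

theorem exists_isOpen_isCompact_mem_of_isCompact_connectedComponent {X : Type*}
    [TopologicalSpace X] [LocallyCompactSpace X] [T2Space X] {x : X}
    (hx : IsCompact (connectedComponent x)) : ∃ V, IsOpen V ∧ IsCompact V ∧ x ∈ V := by
  obtain ⟨L, hL, hxL⟩ := exists_compact_superset hx
  have : CompactSpace L := isCompact_iff_compactSpace.mp hL
  have hxL' : x ∈ L := interior_subset (hxL mem_connectedComponent)
  obtain ⟨V, hV, hxV, hVL⟩ := exists_isClopen_mem_subset_of_connectedComponent_subset
    (isOpen_interior.preimage continuous_subtype_val) (x := ⟨x, hxL'⟩)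
    (image_subset_iff.mp <| (continuous_subtype_val.image_connectedComponent_subset _).trans hxL)
  obtain ⟨O, hO, rfl⟩ := isOpen_induced_iff.mp hV.isOpen
  have hOL : O ∩ interior L = Subtype.val '' (Subtype.val ⁻¹' O : Set L) := by
    ext y
    constructor
    · rintro ⟨hyO, hyL⟩
      exact ⟨⟨y, interior_subset hyL⟩, hyO, rfl⟩
    · rintro ⟨y, hyO, rfl⟩
      exact ⟨hyO, hVL hyO⟩
  refine ⟨O ∩ interior L, hO.inter isOpen_interior, ?_, hxV, hxL mem_connectedComponent⟩
  rw [hOL]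
  exact hV.isClosed.isCompact.image continuous_subtype_val

theorem isClosed_connectedComponentIn {X : Type*} [TopologicalSpace X] {Z : Set X}
    (hZ : IsClosed Z) (z : X) : IsClosed (connectedComponentIn Z z) := by
  by_cases hz : z ∈ Z
  · rw [connectedComponentIn_eq_image hz]
    exact hZ.isClosedEmbedding_subtypeVal.isClosedMap _ isClosed_connectedComponent
  · rw [connectedComponentIn_eq_empty hz]
    exact isClosed_empty

theorem IsClosed.exists_isOpen_mem_isCompact_inter_of_isCompact_connectedComponentIn
    {X : Type*} [TopologicalSpace X] [LocallyCompactSpace X] [T2Space X] {Z : Set X}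
    (hZ : IsClosed Z) {z : X} (hz : z ∈ Z) (hC : IsCompact (connectedComponentIn Z z)) :
    ∃ O, IsOpen O ∧ z ∈ O ∧ IsCompact (O ∩ Z) := by
  have := hZ.locallyCompactSpace
  rw [connectedComponentIn_eq_image hz, ← IsInducing.subtypeVal.isCompact_iff] at hC
  obtain ⟨V, hV, hVc, hzV⟩ := exists_isOpen_isCompact_mem_of_isCompact_connectedComponent hC
  obtain ⟨O, hO, rfl⟩ := isOpen_induced_iff.mp hV
  refine ⟨O, hO, hzV, ?_⟩
  rw [inter_comm, ← Subtype.image_preimage_coe]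
  exact hVc.image continuous_subtype_val

theorem IsOpenMap.not_isCompact_inter_preimage_re_eq_zero {X : Type*} [TopologicalSpace X]
    {f : X → ℂ} (hf : IsOpenMap f) (hfc : Continuous f) {O : Set X} (hO : IsOpen O)
    (hne : (O ∩ f ⁻¹' {w | w.re = 0}).Nonempty) : ¬ IsCompact (O ∩ f ⁻¹' {w | w.re = 0}) := by
  intro hK
  obtain ⟨a, ⟨haO, ha⟩, hmax⟩ :=
    hK.exists_isMaxOn hne (Complex.continuous_im.comp hfc).continuousOn
  have hup : ∀ᶠ t : ℝ in 𝓝 0, f a + t * Complex.I ∈ f '' O := by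
    refine (Continuous.tendsto (by fun_prop) 0).eventually ((hf O hO).mem_nhds ?_)
    simpa using mem_image_of_mem f haO
  obtain ⟨t, ⟨w, hwO, hw⟩, ht⟩ :=
    ((hup.filter_mono (nhdsWithin_le_nhds (s := Ioi 0))).and self_mem_nhdsWithin).exists
  have hwK : w ∈ O ∩ f ⁻¹' {w | w.re = 0} := ⟨hwO, by simp [hw, show (f a).re = 0 from ha]⟩
  have hle : (f w).im ≤ (f a).im := hmax hwK
  simp only [hw, Complex.add_im, Complex.mul_im, Complex.ofReal_re, Complex.ofReal_im,
    Complex.I_re, Complex.I_im] at hle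
  linarith [show (0 : ℝ) < t from ht]

theorem connectedComponentIn_re_eq_zero_unbounded (P : Polynomial ℂ)
    (hP : 0 < P.natDegree) (z : ℂ) (hz : (Polynomial.eval z P).re = 0) :
    ¬ Bornology.IsBounded
      (connectedComponentIn {w : ℂ | (Polynomial.eval w P).re = 0} z) := by
  intro hb
  have hZ : IsClosed {w : ℂ | (Polynomial.eval w P).re = 0} :=
    isClosed_eq (Complex.continuous_re.comp P.continuous) continuous_const
  obtain ⟨O, hO, hzO, hK⟩ := hZ.exists_isOpen_mem_isCompact_inter_of_isCompact_connectedComponentIn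
    hz (Metric.isCompact_of_isClosed_isBounded (isClosed_connectedComponentIn hZ z) hb)
  exact (P.isOpenQuotientMap_eval hP.ne').isOpenMap.not_isCompact_inter_preimage_re_eq_zero
    P.continuous hO ⟨z, hzO, hz⟩ hK
end
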